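/- Let W ⊆ R^n be a subspace, c ≥ 0 and d ∈ R^n, and suppose the LP min ⟨c,x⟩ s.t. x ∈ W + d, x ≥ 0 is feasible and bounded. Then it has an optimal solution x with ‖x − d‖_∞ ≤ κ_W · ‖d_{Λ(d,c)}‖_1, where Λ(d,c) = supp(d^−) ∪ supp(c^+). -/

import Mathlib

/-!
Pick a feasible `y` that is `ℓ₁`-closest to `d` among the feasible points of cost at most
`⟨c, y⟩`, and write `y - d = ∑ₗ hₗ` conformally with elementary vectors `hₗ ∈ W`. A small step
`y - ε hₗ` would be feasible, no more costly and closer to `d`, so it is blocked at some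
coordinate `jₗ`: either `y_{jₗ} = 0 < hₗ(jₗ)`, forcing `d_{jₗ} < 0`, or `hₗ(jₗ) < 0 < c_{jₗ}`.
In both cases `jₗ ∈ Λ(d,c)` and `|y - d|_{jₗ} ≤ |d_{jₗ}|`, so by conformality
`|yᵢ - dᵢ| = ∑ₗ |hₗ(i)| ≤ κ_W ∑ₗ |hₗ(jₗ)| ≤ κ_W ∑_{j ∈ Λ} |dⱼ|`.
Every feasible point is thus dominated in cost by one in the compact set of feasible points
within this distance of `d`, and the minimum of the cost there is a global optimum.
-/

open Finset

variable {ι : Type*} [Fintype ι] [DecidableEq ι]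

/-- `y` conforms to `x` if `x i * y i > 0` whenever `y i ≠ 0`. -/
def Conforms (y x : ι → ℝ) : Prop := ∀ i, y i ≠ 0 → x i * y i > 0

/-- An elementary vector of `W`: a support-minimal nonzero vector of `W`. -/
def IsElementary (W : Submodule ℝ (ι → ℝ)) (g : ι → ℝ) : Prop :=
  g ∈ W ∧ g ≠ 0 ∧
    ∀ h ∈ W, h ≠ 0 → {i | h i ≠ 0} ⊆ {i | g i ≠ 0} → {i | h i ≠ 0} = {i | g i ≠ 0}

/-- The fractional circuit imbalance measure `κ_W`. -/
noncomputable def kappa (W : Submodule ℝ (ι → ℝ)) : ℝ :=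
  sSup ({1} ∪ {t : ℝ | ∃ g : ι → ℝ, IsElementary W g ∧
    ∃ i j, g i ≠ 0 ∧ g j ≠ 0 ∧ t = |g j| / |g i|})

/-- An integer elementary vector, normalized so that the gcd of its entries is 1. -/
def IsIntElementary (W : Submodule ℝ (ι → ℝ)) (g : ι → ℤ) : Prop :=
  IsElementary W (fun i => (g i : ℝ)) ∧ Finset.univ.gcd (fun i => (g i).natAbs) = 1

/-- The max-circuit imbalance measure `κ̄_W`. -/
noncomputable def barKappa (W : Submodule ℝ (ι → ℝ)) : ℕ :=
  sSup {k : ℕ | ∃ g : ι → ℤ, IsIntElementary W g ∧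
    k = Finset.univ.sup fun i => (g i).natAbs}

/-- The lcm-circuit imbalance measure `κ̇_W`: the least positive integer divisible by
every entry of every normalized integer elementary vector. -/
noncomputable def dotKappa (W : Submodule ℝ (ι → ℝ)) : ℕ :=
  sInf {k : ℕ | 0 < k ∧ ∀ g : ι → ℤ, IsIntElementary W g → ∀ i, g i ≠ 0 → (g i).natAbs ∣ k}

/-- A rational linear subspace: one spanned by rational vectors. -/
def IsRationalSubspace (W : Submodule ℝ (ι → ℝ)) : Prop :=
  ∃ S : Set (ι → ℚ), W = Submodule.span ℝ ((fun v : ι → ℚ => fun i => ((v i : ℝ))) '' S)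

/-- The orthogonal complement of `W` in `ℝ^ι` with the standard inner product. -/
def orthComp (W : Submodule ℝ (ι → ℝ)) : Submodule ℝ (ι → ℝ) where
  carrier := {v | ∀ w ∈ W, ∑ i, v i * w i = 0}
  add_mem' := by
    intro a b ha hb w hw
    have := ha w hw
    have := hb w hw
    simp only [Set.mem_setOf_eq, Pi.add_apply, add_mul, Finset.sum_add_distrib, *]
    ring
  zero_mem' := by intro w hw; simp
  smul_mem' := by
    intro c a ha w hw
    have h := ha w hw
    simp only [Set.mem_setOf_eq, Pi.smul_apply, smul_eq_mul, mul_assoc, ← Finset.mul_sum, h,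
      mul_zero]


open Filter Topology
open scoped Matrix

section Conformity

variable {ι : Type*}

theorem conforms_refl (x : ι → ℝ) : Conforms x x := fun _ h => mul_self_pos.2 h

theorem Conforms.ne_zero {v w : ι → ℝ} (h : Conforms v w) {i : ι} (hi : v i ≠ 0) : w i ≠ 0 :=
  left_ne_zero_of_mul (h i hi).ne'

theorem Conforms.trans {u v w : ι → ℝ} (huv : Conforms u v) (hvw : Conforms v w) :
    Conforms u w := by
  intro i hi
  have h₁ := huv i hi
  have h₂ := hvw i (huv.ne_zero hi)
  nlinarith [mul_pos h₁ h₂, mul_self_pos.2 (huv.ne_zero hi)]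

theorem Conforms.smul {v w : ι → ℝ} (h : Conforms v w) {t : ℝ} (ht : 0 < t) :
    Conforms (t • v) w := by
  intro i hi
  have := h i (right_ne_zero_of_mul hi)
  simp only [Pi.smul_apply, smul_eq_mul]
  nlinarith

theorem Conforms.card_support_lt [Fintype ι] {v w : ι → ℝ} (h : Conforms v w) {i : ι}
    (hwi : w i ≠ 0) (hvi : v i = 0) : #{k | v k ≠ 0} < #{k | w k ≠ 0} := by
  refine Finset.card_lt_card ⟨fun k hk => ?_, fun hsub => ?_⟩
  · simp only [mem_filter, mem_univ, true_and] at hk ⊢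
    exact h.ne_zero hk
  · exact (by simpa using hsub (by simpa using hwi) : v i ≠ 0) hvi

/-- The step `w ↦ w - t • u` with `t = min {wᵢ / uᵢ | wᵢ uᵢ > 0}`: it cancels a coordinate
of `w` without leaving the orthant of `w`. -/
theorem exists_conforms_sub_smul [Fintype ι] {w u : ι → ℝ} (hsupp : ∀ i, u i ≠ 0 → w i ≠ 0)
    (hpos : ∃ i, 0 < w i * u i) :
    ∃ t : ℝ, 0 < t ∧ Conforms (w - t • u) w ∧ ∃ i, w i ≠ 0 ∧ (w - t • u) i = 0 := by
  have hF : (univ.filter fun i => 0 < w i * u i).Nonempty := by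
    obtain ⟨i, hi⟩ := hpos
    exact ⟨i, by simpa using hi⟩
  have hratio : ∀ i, 0 < w i * u i → 0 < w i / u i := fun i hi => by
    rw [← mul_div_mul_right (w i) (u i) (right_ne_zero_of_mul hi.ne'), ← sq]
    exact div_pos hi (sq_pos_of_ne_zero (right_ne_zero_of_mul hi.ne'))
  obtain ⟨i₁, hi₁, ht⟩ := exists_mem_eq_inf' hF fun i => w i / u i
  set t := (univ.filter fun i => 0 < w i * u i).inf' hF fun i => w i / u i
  have hi₁ : 0 < w i₁ * u i₁ := (mem_filter.1 hi₁).2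
  have htpos : 0 < t := ht ▸ hratio i₁ hi₁
  refine ⟨t, htpos, fun i hi => ?_, i₁, left_ne_zero_of_mul hi₁.ne', ?_⟩
  · have hwi : w i ≠ 0 := by
      by_contra hwi
      have hui : u i ≠ 0 := fun hui => hi (by simp [hwi, hui])
      exact hsupp i hui hwi
    simp only [Pi.sub_apply, Pi.smul_apply, smul_eq_mul] at hi ⊢
    refine lt_of_le_of_ne ?_ (mul_ne_zero hwi hi).symm
    rcases le_or_gt (w i * u i) 0 with hwu | hwu
    · nlinarith [mul_nonneg htpos.le (neg_nonneg.2 hwu), mul_self_nonneg (w i)]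
    · have htle : t ≤ w i / u i := inf'_le _ (by simpa using hwu)
      have hui : u i ≠ 0 := right_ne_zero_of_mul hwu.ne'
      have : t * (w i * u i) ≤ w i * w i := by
        calc t * (w i * u i) ≤ w i / u i * (w i * u i) := by gcongr
          _ = w i * w i := by field_simp
      nlinarith
  · simp only [Pi.sub_apply, Pi.smul_apply, smul_eq_mul, ht]
    field_simp [right_ne_zero_of_mul hi₁.ne']
    simp

end Conformity

section Elementary

variable {ι : Type*} {W : Submodule ℝ (ι → ℝ)}

theorem IsElementary.smul {g : ι → ℝ} (hg : IsElementary W g) {t : ℝ} (ht : t ≠ 0) :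
    IsElementary W (t • g) := by
  have hsupp : {i | (t • g) i ≠ 0} = {i | g i ≠ 0} := by
    ext i; simp [ht]
  refine ⟨W.smul_mem t hg.1, smul_ne_zero ht hg.2.1, fun h hW h0 hsub => ?_⟩
  rw [hsupp] at hsub ⊢
  exact hg.2.2 h hW h0 hsub

theorem IsElementary.exists_eq_smul {h g : ι → ℝ} (hh : IsElementary W h) (hg : g ∈ W)
    (hg0 : g ≠ 0) (hsub : {i | g i ≠ 0} ⊆ {i | h i ≠ 0}) : ∃ c : ℝ, h = c • g := by
  obtain ⟨i₀, hi₀⟩ := Function.ne_iff.1 hg0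
  refine ⟨h i₀ / g i₀, ?_⟩
  by_contra hne
  have hv0 : h - (h i₀ / g i₀) • g ≠ 0 := sub_ne_zero.2 hne
  have hvsub : {i | (h - (h i₀ / g i₀) • g) i ≠ 0} ⊆ {i | h i ≠ 0} := by
    intro i hi
    by_contra hhi
    have hgi : g i = 0 := by_contra fun hgi => hhi (hsub hgi)
    simp_all
  have hi₀h : i₀ ∈ {i | (h - (h i₀ / g i₀) • g) i ≠ 0} :=
    (hh.2.2 _ (W.sub_mem hh.1 (W.smul_mem _ hg)) hv0 hvsub).symm ▸ hsub hi₀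
  exact hi₀h (by simp [div_mul_cancel₀ _ hi₀])

theorem IsElementary.abs_div_abs_eq {g h : ι → ℝ} (hg : IsElementary W g) (hh : IsElementary W h)
    (hsupp : {k | g k ≠ 0} = {k | h k ≠ 0}) (i j : ι) : |h j| / |h i| = |g j| / |g i| := by
  obtain ⟨c, rfl⟩ := hh.exists_eq_smul hg.1 hg.2.1 hsupp.le
  have hc : c ≠ 0 := by rintro rfl; exact hh.2.1 (zero_smul ℝ g)
  simp only [Pi.smul_apply, smul_eq_mul, abs_mul]
  exact mul_div_mul_left _ _ (abs_ne_zero.2 hc)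

variable [Finite ι]

/-- Proportionality of elementary vectors with equal supports leaves finitely many values for
the ratios in the definition of `kappa`. -/
theorem kappa_bddAbove (W : Submodule ℝ (ι → ℝ)) :
    BddAbove ({1} ∪ {t : ℝ | ∃ g : ι → ℝ, IsElementary W g ∧
      ∃ i j, g i ≠ 0 ∧ g j ≠ 0 ∧ t = |g j| / |g i|}) := by
  refine ((Set.finite_singleton 1).union (Set.Finite.subset (Set.finite_iUnion fun S : Set ι =>
    Set.finite_iUnion fun i : ι => Set.finite_iUnion fun j : ι => Set.Subsingleton.finite
      (s := {t : ℝ | ∃ g : ι → ℝ, IsElementary W g ∧ {k | g k ≠ 0} = S ∧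
        t = |g j| / |g i|}) ?_) ?_)).bddAbove
  · rintro _ ⟨g, hg, rfl, rfl⟩ _ ⟨h, hh, hS, rfl⟩
    exact (hg.abs_div_abs_eq hh hS.symm i j).symm
  · rintro _ ⟨g, hg, i, j, -, -, rfl⟩
    exact Set.mem_iUnion_of_mem {k | g k ≠ 0} <| Set.mem_iUnion_of_mem i <|
      Set.mem_iUnion_of_mem j ⟨g, hg, rfl, rfl⟩

theorem one_le_kappa (W : Submodule ℝ (ι → ℝ)) : 1 ≤ kappa W :=
  le_csSup (kappa_bddAbove W) (Or.inl rfl)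

theorem IsElementary.abs_le_kappa_mul {g : ι → ℝ} (hg : IsElementary W g) {j : ι}
    (hj : g j ≠ 0) (i : ι) : |g i| ≤ kappa W * |g j| := by
  by_cases hi : g i = 0
  · simpa [hi] using mul_nonneg (zero_le_one.trans (one_le_kappa W)) (abs_nonneg (g j))
  rw [← div_le_iff₀ (abs_pos.2 hj)]
  exact le_csSup (kappa_bddAbove W) (Or.inr ⟨g, hg, j, i, hj, hi, rfl⟩)

end Elementary

section Decomposition

variable {ι : Type*} [Fintype ι] {W : Submodule ℝ (ι → ℝ)}

theorem exists_isElementary_conforms {z : ι → ℝ} (hz : z ∈ W) (hz0 : z ≠ 0) :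
    ∃ g, IsElementary W g ∧ Conforms g z := by
  induction hk : #{i | z i ≠ 0} using Nat.strong_induction_on generalizing z with
  | _ k ih =>
  by_cases hel : IsElementary W z
  · exact ⟨z, hel, conforms_refl z⟩
  obtain ⟨u, hu, hu0, hsub, hne⟩ : ∃ u ∈ W, u ≠ 0 ∧ {i | u i ≠ 0} ⊆ {i | z i ≠ 0} ∧
      {i | u i ≠ 0} ≠ {i | z i ≠ 0} := by
    simpa [IsElementary, hz, hz0] using hel
  obtain ⟨i₀, hi₀⟩ := Function.ne_iff.1 hu0
  obtain ⟨i', hzi', hui'⟩ := Set.exists_of_ssubset (hsub.ssubset_of_ne hne)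
  -- rescaling `u` makes `z i₀ * u i₀` positive without changing its support
  set u' := (z i₀ * u i₀) • u
  have hsupp : ∀ i, u' i ≠ 0 → z i ≠ 0 := fun i hi => hsub (right_ne_zero_of_mul hi)
  have hpos : 0 < z i₀ * u' i₀ := by
    have : z i₀ * u' i₀ = (z i₀ * u i₀) ^ 2 := by simp only [u', Pi.smul_apply, smul_eq_mul]; ring
    exact this ▸ sq_pos_of_ne_zero (mul_ne_zero (hsub hi₀) hi₀)
  obtain ⟨t, -, hconf, j, hzj, hvj⟩ := exists_conforms_sub_smul hsupp ⟨i₀, hpos⟩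
  have hv0 : z - t • u' ≠ 0 := fun hv => hzi' (by simpa [u', not_not.1 hui'] using congrFun hv i')
  obtain ⟨g, hg, hgv⟩ := ih _ (hk ▸ hconf.card_support_lt hzj hvj)
    (W.sub_mem hz (W.smul_mem _ (W.smul_mem _ hu))) hv0 rfl
  exact ⟨g, hg, hgv.trans hconf⟩

theorem exists_conformal_decomposition {z : ι → ℝ} (hz : z ∈ W) :
    ∃ (m : ℕ) (h : Fin m → ι → ℝ),
      (∀ l, IsElementary W (h l) ∧ Conforms (h l) z) ∧ ∑ l, h l = z := by
  induction hk : #{i | z i ≠ 0} using Nat.strong_induction_on generalizing z with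
  | _ k ih =>
  obtain rfl | hz0 := eq_or_ne z 0
  · exact ⟨0, Fin.elim0, Fin.rec0, by simp⟩
  obtain ⟨g, hg, hgz⟩ := exists_isElementary_conforms hz hz0
  obtain ⟨i, hi⟩ := Function.ne_iff.1 hg.2.1
  obtain ⟨t, ht, hconf, j, hzj, hj⟩ :=
    exists_conforms_sub_smul (w := z) (fun _ hi => hgz.ne_zero hi) ⟨i, hgz i hi⟩
  obtain ⟨m, h, hh, hsum⟩ :=
    ih _ (hk ▸ hconf.card_support_lt hzj hj) (W.sub_mem hz (W.smul_mem t hg.1)) rfl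
  refine ⟨m + 1, Fin.cons (t • g) h, Fin.cases ⟨hg.smul ht.ne', hgz.smul ht⟩
    fun l => ⟨(hh l).1, (hh l).2.trans hconf⟩, ?_⟩
  rw [Fin.sum_cons, hsum, add_sub_cancel]

end Decomposition

theorem sum_abs_eq_abs_of_forall_mul_pos {α : Type*} {s : Finset α} {f : α → ℝ} {a : ℝ}
    (hs : ∑ l ∈ s, f l = a) (hf : ∀ l ∈ s, f l ≠ 0 → 0 < a * f l) : ∑ l ∈ s, |f l| = |a| := by
  rcases le_or_gt 0 a with ha | ha
  · have hnonneg : ∀ l ∈ s, 0 ≤ f l := fun l hl => by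
      by_contra hneg
      nlinarith [hf l hl (by linarith)]
    rw [← hs, abs_sum_of_nonneg hnonneg]
    exact sum_congr rfl fun l hl => abs_of_nonneg (hnonneg l hl)
  · have hnonpos : ∀ l ∈ s, f l ≤ 0 := fun l hl => by
      by_contra hpos
      nlinarith [hf l hl (by linarith)]
    rw [abs_of_neg ha, ← hs, ← sum_neg_distrib]
    exact sum_congr rfl fun l hl => abs_of_nonpos (hnonpos l hl)

theorem abs_sub_mul_eq_of_mul_pos {a b ε : ℝ} (hab : b ≠ 0 → 0 < a * b) (hba : |b| ≤ |a|)
    (hε₀ : 0 ≤ ε) (hε₁ : ε ≤ 1) : |a - ε * b| = |a| - ε * |b| := by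
  rcases eq_or_ne b 0 with rfl | hb
  · simp
  rcases mul_pos_iff.1 (hab hb) with ⟨ha, hb⟩ | ⟨ha, hb⟩
  · rw [abs_of_pos ha, abs_of_pos hb] at *
    rw [abs_of_nonneg (by nlinarith)]
  · rw [abs_of_neg ha, abs_of_neg hb] at *
    rw [abs_of_nonpos (by nlinarith)]
    ring

theorem sum_le_sum_image_sum {α β : Type*} [DecidableEq β] (s : Finset α) {a : α → β → ℝ}
    (ha : ∀ l p, 0 ≤ a l p) (j : α → β) :
    ∑ l ∈ s, a l (j l) ≤ ∑ p ∈ s.image j, ∑ l ∈ s, a l p := by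
  rw [sum_comm]
  exact sum_le_sum fun l hl => single_le_sum (fun p _ => ha l p) (mem_image_of_mem j hl)

theorem isCompact_of_abs_sub_le {ι : Type*} {S : Set (ι → ℝ)} (hS : IsClosed S) (d : ι → ℝ)
    (R : ℝ) (hR : ∀ y ∈ S, ∀ i, |y i - d i| ≤ R) : IsCompact S :=
  (isCompact_Icc (a := d - fun _ => R) (b := d + fun _ => R)).of_isClosed_subset hS fun y hy =>
    ⟨fun i => by simp only [Pi.sub_apply]; linarith [abs_le.1 (hR y hy i)],
     fun i => by simp only [Pi.add_apply]; linarith [abs_le.1 (hR y hy i)]⟩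

theorem IsClosed.exists_isMinOn_sum_abs_sub {ι : Type*} [Fintype ι] {S : Set (ι → ℝ)}
    (hS : IsClosed S) (hne : S.Nonempty) (d : ι → ℝ) : ∃ y ∈ S, IsMinOn (fun y => ∑ i, |y i - d i|) S y := by
  obtain ⟨x, hx⟩ := hne
  have hcont : Continuous fun y : ι → ℝ => ∑ i, |y i - d i| := by fun_prop
  have hT : IsCompact (S ∩ {y | ∑ i, |y i - d i| ≤ ∑ i, |x i - d i|}) :=
    isCompact_of_abs_sub_le (hS.inter (_root_.isClosed_le hcont continuous_const)) d _
      fun y hy i => (single_le_sum (fun i _ => abs_nonneg (y i - d i)) (mem_univ i)).trans hy.2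
  obtain ⟨y, hy, hmin⟩ := hT.exists_isMinOn ⟨x, hx, le_refl (∑ i, |x i - d i|)⟩ hcont.continuousOn
  refine ⟨y, hy.1, fun y' hy' => ?_⟩
  by_cases h : ∑ i, |y' i - d i| ≤ ∑ i, |x i - d i|
  · exact hmin ⟨hy', h⟩
  · exact (hmin ⟨hx, le_refl (∑ i, |x i - d i|)⟩).trans (le_of_not_ge h)

section Proximity

def feasibleSet {ι : Type*} (W : Submodule ℝ (ι → ℝ)) (d : ι → ℝ) : Set (ι → ℝ) :=
  {x | x - d ∈ W ∧ ∀ i, 0 ≤ x i}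

variable {ι : Type*} [Fintype ι] {W : Submodule ℝ (ι → ℝ)} {c d y : ι → ℝ}

theorem isClosed_feasibleSet (W : Submodule ℝ (ι → ℝ)) (d : ι → ℝ) :
    IsClosed (feasibleSet W d) :=
  (W.closed_of_finiteDimensional.preimage (continuous_sub_right d)).inter isClosed_Ici

/-- A small step from `y` along `-g` brings `y` closer to `d` in `ℓ₁`, so minimality says it
must be blocked, by the sign constraint or by the cost. -/
theorem exists_blocking_index (hc : ∀ i, 0 ≤ c i) (hy : y ∈ feasibleSet W d)
    (hmin : ∀ y' ∈ feasibleSet W d, c ⬝ᵥ y' ≤ c ⬝ᵥ y →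
      ∑ i, |y i - d i| ≤ ∑ i, |y' i - d i|)
    {g : ι → ℝ} (hgW : g ∈ W) (hg0 : g ≠ 0) (hgy : Conforms g (y - d))
    (hgle : ∀ i, |g i| ≤ |y i - d i|) :
    ∃ j, (y j = 0 ∧ 0 < g j) ∨ (0 < c j ∧ g j < 0) := by
  by_contra! hblock
  have hε : ∀ᶠ ε in 𝓝[>] (0 : ℝ), ε ≤ 1 ∧ ∀ j, 0 ≤ y j - ε * g j := by
    refine ((eventually_le_nhds one_pos).filter_mono nhdsWithin_le_nhds).and
      (eventually_all.2 fun j => ?_)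
    rcases (hy.2 j).lt_or_eq with hyj | hyj
    · have hlim : Tendsto (fun ε => y j - ε * g j) (𝓝 0) (𝓝 (y j)) :=
        (by fun_prop : Continuous fun ε : ℝ => y j - ε * g j).tendsto' 0 (y j) (by simp)
      exact ((hlim.eventually (lt_mem_nhds hyj)).mono fun _ h => h.le).filter_mono
        nhdsWithin_le_nhds
    · filter_upwards [self_mem_nhdsWithin] with ε (hε : 0 < ε)
      nlinarith [(hblock j).1 hyj.symm]
  obtain ⟨ε, ⟨hε₁, hεy⟩, hε₀ : 0 < ε⟩ := (hε.and self_mem_nhdsWithin).exists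
  have hfeas : y - ε • g ∈ feasibleSet W d := by
    refine ⟨?_, fun j => by simpa using hεy j⟩
    rw [sub_right_comm]
    exact W.sub_mem hy.1 (W.smul_mem ε hgW)
  have hcost : c ⬝ᵥ (y - ε • g) ≤ c ⬝ᵥ y := by
    rw [dotProduct_sub, dotProduct_smul, smul_eq_mul, sub_le_self_iff]
    refine mul_nonneg hε₀.le (sum_nonneg fun i _ => ?_)
    rcases (hc i).eq_or_lt with hci | hci
    · simp [← hci]
    · exact mul_nonneg hci.le ((hblock i).2 hci)
  have hdist : ∑ i, |(y - ε • g) i - d i| = ∑ i, |y i - d i| - ε * ∑ i, |g i| := by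
    rw [mul_sum, ← sum_sub_distrib]
    refine sum_congr rfl fun i _ => ?_
    rw [← abs_sub_mul_eq_of_mul_pos (a := y i - d i) (hgy i) (hgle i) hε₀.le hε₁]
    simp only [Pi.sub_apply, Pi.smul_apply, smul_eq_mul]
    ring_nf
  have hg : 0 < ∑ i, |g i| := by
    obtain ⟨i, hi⟩ := Function.ne_iff.1 hg0
    exact sum_pos' (fun _ _ => abs_nonneg _) ⟨i, mem_univ i, abs_pos.2 hi⟩
  nlinarith [hmin _ hfeas hcost]

theorem exists_index_abs_sub_le_abs (hc : ∀ i, 0 ≤ c i) (hy : y ∈ feasibleSet W d)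
    (hmin : ∀ y' ∈ feasibleSet W d, c ⬝ᵥ y' ≤ c ⬝ᵥ y →
      ∑ i, |y i - d i| ≤ ∑ i, |y' i - d i|)
    {g : ι → ℝ} (hgW : g ∈ W) (hg0 : g ≠ 0) (hgy : Conforms g (y - d))
    (hgle : ∀ i, |g i| ≤ |y i - d i|) :
    ∃ j, (d j < 0 ∨ 0 < c j) ∧ g j ≠ 0 ∧ |y j - d j| ≤ |d j| := by
  obtain ⟨j, ⟨hyj, hgj⟩ | ⟨hcj, hgj⟩⟩ := exists_blocking_index hc hy hmin hgW hg0 hgy hgle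
  · have hdg : 0 < (y j - d j) * g j := hgy j hgj.ne'
    rw [hyj] at hdg
    exact ⟨j, Or.inl (by nlinarith), hgj.ne', by rw [hyj, zero_sub, abs_neg]⟩
  · have hdg : 0 < (y j - d j) * g j := hgy j hgj.ne
    have hyd : y j - d j < 0 := by nlinarith
    refine ⟨j, Or.inr hcj, hgj.ne, ?_⟩
    rw [abs_of_neg hyd, abs_of_pos (by linarith [hy.2 j])]
    linarith [hy.2 j]

theorem abs_sub_le_kappa_mul_of_minimal (hc : ∀ i, 0 ≤ c i) (hy : y ∈ feasibleSet W d)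
    (hmin : ∀ y' ∈ feasibleSet W d, c ⬝ᵥ y' ≤ c ⬝ᵥ y →
      ∑ i, |y i - d i| ≤ ∑ i, |y' i - d i|) (i : ι) :
    |y i - d i| ≤ kappa W * ∑ p ∈ univ.filter (fun p => d p < 0 ∨ 0 < c p), |d p| := by
  classical
  obtain ⟨m, h, hh, hsum⟩ := exists_conformal_decomposition hy.1
  have habs : ∀ p, ∑ l, |h l p| = |y p - d p| := fun p =>
    sum_abs_eq_abs_of_forall_mul_pos (by rw [← Finset.sum_apply, hsum]; rfl)
      fun l _ => (hh l).2 p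
  have hle : ∀ l p, |h l p| ≤ |y p - d p| := fun l p =>
    habs p ▸ single_le_sum (fun l _ => abs_nonneg (h l p)) (mem_univ l)
  choose j hjΛ hj0 hjd using fun l =>
    exists_index_abs_sub_le_abs hc hy hmin (hh l).1.1 (hh l).1.2.1 (hh l).2 (hle l)
  have hκ : 0 ≤ kappa W := zero_le_one.trans (one_le_kappa W)
  calc |y i - d i| = ∑ l, |h l i| := (habs i).symm
    _ ≤ ∑ l, kappa W * |h l (j l)| := sum_le_sum fun l _ => (hh l).1.abs_le_kappa_mul (hj0 l) i
    _ = kappa W * ∑ l, |h l (j l)| := (mul_sum _ _ _).symm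
    _ ≤ kappa W * ∑ p ∈ univ.image j, ∑ l, |h l p| := by
      gcongr
      exact sum_le_sum_image_sum _ (fun l p => abs_nonneg (h l p)) j
    _ ≤ kappa W * ∑ p ∈ univ.image j, |d p| := by
      gcongr with p hp
      obtain ⟨l, -, rfl⟩ := mem_image.1 hp
      exact (habs (j l)).trans_le (hjd l)
    _ ≤ kappa W * ∑ p ∈ univ.filter (fun p => d p < 0 ∨ 0 < c p), |d p| := by
      refine mul_le_mul_of_nonneg_left (sum_le_sum_of_subset_of_nonneg ?_ fun p _ _ =>
        abs_nonneg (d p)) hκ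
      exact image_subset_iff.2 fun l _ => mem_filter.2 ⟨mem_univ _, hjΛ l⟩

theorem exists_mem_feasibleSet_dotProduct_le_abs_sub_le (hc : ∀ i, 0 ≤ c i) {x : ι → ℝ}
    (hx : x ∈ feasibleSet W d) :
    ∃ y ∈ feasibleSet W d, c ⬝ᵥ y ≤ c ⬝ᵥ x ∧
      ∀ i, |y i - d i| ≤ kappa W * ∑ p ∈ univ.filter (fun p => d p < 0 ∨ 0 < c p), |d p| := by
  have hS : IsClosed (feasibleSet W d ∩ {y | c ⬝ᵥ y ≤ c ⬝ᵥ x}) :=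
    (isClosed_feasibleSet W d).inter (isClosed_le (by fun_prop) continuous_const)
  obtain ⟨y, ⟨hy, hyx⟩, hmin⟩ := hS.exists_isMinOn_sum_abs_sub ⟨x, hx, le_refl (c ⬝ᵥ x)⟩ d
  exact ⟨y, hy, hyx, abs_sub_le_kappa_mul_of_minimal hc hy fun y' hy' hcost =>
    hmin ⟨hy', hcost.trans hyx⟩⟩

end Proximity

theorem hoffman_optimality_general {n : ℕ} (W : Submodule ℝ (Fin n → ℝ)) (d c : Fin n → ℝ)
    (hc : ∀ i, 0 ≤ c i)
    (hfeas : ∃ x : Fin n → ℝ, x - d ∈ W ∧ ∀ i, 0 ≤ x i) :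
    ∃ x : Fin n → ℝ, (x - d ∈ W ∧ ∀ i, 0 ≤ x i) ∧
      (∀ x' : Fin n → ℝ, (x' - d ∈ W ∧ ∀ i, 0 ≤ x' i) →
        ∑ i, c i * x i ≤ ∑ i, c i * x' i) ∧
      ∀ i, |x i - d i| ≤
        kappa W * ∑ i ∈ Finset.univ.filter (fun i => d i < 0 ∨ 0 < c i), |d i| := by
  set R := kappa W * ∑ i ∈ Finset.univ.filter (fun i => d i < 0 ∨ 0 < c i), |d i|
  have hK : IsCompact (feasibleSet W d ∩ {x | ∀ i, |x i - d i| ≤ R}) := by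
    refine isCompact_of_abs_sub_le ((isClosed_feasibleSet W d).inter ?_) d R fun x hx => hx.2
    simp only [Set.ofPred_forall]
    exact isClosed_iInter fun i => isClosed_le (by fun_prop) continuous_const
  obtain ⟨x₀, hx₀⟩ := hfeas
  obtain ⟨y₀, hy₀, -, hy₀R⟩ := exists_mem_feasibleSet_dotProduct_le_abs_sub_le hc hx₀
  obtain ⟨x, hx, hxmin⟩ :=
    hK.exists_isMinOn ⟨y₀, hy₀, hy₀R⟩ (by fun_prop : Continuous (c ⬝ᵥ ·)).continuousOn
  refine ⟨x, hx.1, fun x' hx' => ?_, hx.2⟩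
  obtain ⟨y', hy', hcost, hy'R⟩ := exists_mem_feasibleSet_dotProduct_le_abs_sub_le hc hx'
  exact (hxmin ⟨hy', hy'R⟩).trans hcost

/-- Hoffman-type optimality proximity: for `c ≥ 0`, a feasible and bounded
LP `min ⟨c,x⟩, x ∈ W + d, x ≥ 0` has an optimal solution with
`‖x − d‖_∞ ≤ κ_W · ‖d_{Λ(d,c)}‖_1`, where `Λ(d,c) = supp(d⁻) ∪ supp(c⁺)`. -/
theorem hoffman_optimality {n : ℕ} (W : Submodule ℝ (Fin n → ℝ)) (d c : Fin n → ℝ)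
    (hc : ∀ i, 0 ≤ c i)
    (hfeas : ∃ x : Fin n → ℝ, x - d ∈ W ∧ ∀ i, 0 ≤ x i)
    (hbdd : ∃ L : ℝ, ∀ x : Fin n → ℝ, (x - d ∈ W ∧ ∀ i, 0 ≤ x i) →
      L ≤ ∑ i, c i * x i) :
    ∃ x : Fin n → ℝ, (x - d ∈ W ∧ ∀ i, 0 ≤ x i) ∧
      (∀ x' : Fin n → ℝ, (x' - d ∈ W ∧ ∀ i, 0 ≤ x' i) →
        ∑ i, c i * x i ≤ ∑ i, c i * x' i) ∧
      ∀ i, |x i - d i| ≤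
        kappa W * ∑ i ∈ Finset.univ.filter (fun i => d i < 0 ∨ 0 < c i), |d i| :=
  hoffman_optimality_general W d c hc hfeas
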